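/- Let n = 2m be even, let f, f* : F_2^n → F_2, let φ = (φ_1,…,φ_r) : F_2^n → F_2^r, and let φ' = (φ'_1,…,φ'_r) : F_2^n → F_2^r. Assume that for every ω ∈ F_2^r and every β ∈ F_2^n, the Walsh–Hadamard transform of the function x ↦ f(x) + ω·φ(x) at β equals 2^m · (-1)^{f*(β) + ω·φ'(β)} (i.e., f satisfies Property P_r with respect to φ: each f + ω·φ is bent with dual f* + ω·φ'). Then for every Boolean function F : F_2^r → F_2, the function h(x) = f(x) + F(φ(x)) is bent, and its dual is h*(x) = f*(x) + F(φ'(x)). -/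
import Mathlib


noncomputable section

/-- `(-1)^c` for `c ∈ F_2`. -/
def sgn (c : ZMod 2) : ℤ := if c = 0 then 1 else -1

/-- Walsh–Hadamard transform of a Boolean function on `F_2^n`. -/
def walsh {n : ℕ} (f : (Fin n → ZMod 2) → ZMod 2) (μ : Fin n → ZMod 2) : ℤ :=
  ∑ x : Fin n → ZMod 2, sgn (f x + ∑ i, μ i * x i)

/-- `f` is bent: `n` is even and all Walsh coefficients are `±2^(n/2)`. -/
def IsBent {n : ℕ} (f : (Fin n → ZMod 2) → ZMod 2) : Prop :=
  Even n ∧ ∀ μ, walsh f μ = 2 ^ (n / 2) ∨ walsh f μ = -(2 ^ (n / 2))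

/-- `fs` is the dual of the bent function `f`. -/
def IsDualOf {n : ℕ} (fs f : (Fin n → ZMod 2) → ZMod 2) : Prop :=
  ∀ μ, walsh f μ = 2 ^ (n / 2) * sgn (fs μ)

lemma sgn_add (a b : ZMod 2) : sgn (a + b) = sgn a * sgn b := by revert a b; decide

lemma sgn_sum {ι : Type*} (s : Finset ι) (g : ι → ZMod 2) :
    sgn (∑ x ∈ s, g x) = ∏ x ∈ s, sgn (g x) := by
  induction s using Finset.cons_induction with
  | empty => simp [sgn]
  | cons i s hi ih => simp [Finset.sum_cons, Finset.prod_cons, sgn_add, ih]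

lemma orth {r : ℕ} (c : Fin r → ZMod 2) :
    ∑ ω : Fin r → ZMod 2, sgn (∑ i, ω i * c i) = if c = 0 then (2:ℤ)^r else 0 := by
  have h1 : ∀ ω : Fin r → ZMod 2, sgn (∑ i, ω i * c i) = ∏ i, sgn (ω i * c i) :=
    fun ω => sgn_sum _ _
  simp_rw [h1]
  rw [← Fintype.prod_sum (fun (i : Fin r) (b : ZMod 2) => sgn (b * c i))]
  have h2 : ∀ d : ZMod 2, ∑ b : ZMod 2, sgn (b * d) = if d = 0 then (2:ℤ) else 0 := by decide
  simp_rw [h2]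
  by_cases hc : c = 0
  · simp [hc, Finset.prod_const]
  · obtain ⟨i, hi⟩ := Function.ne_iff.mp hc
    rw [if_neg hc]
    simp only [Pi.zero_apply] at hi
    exact Finset.prod_eq_zero (Finset.mem_univ i) (by simp [hi])

lemma key {r : ℕ} (g : (Fin r → ZMod 2) → ZMod 2) (y : Fin r → ZMod 2) :
    ∑ ω : Fin r → ZMod 2, ∑ a : Fin r → ZMod 2,
        sgn (g a + ∑ i, ω i * a i + ∑ i, ω i * y i) = 2 ^ r * sgn (g y) := by
  rw [Finset.sum_comm]
  have h1 : ∀ a ω : Fin r → ZMod 2,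
      sgn (g a + ∑ i, ω i * a i + ∑ i, ω i * y i)
        = sgn (g a) * sgn (∑ i, ω i * (a i + y i)) := by
    intro a ω
    rw [add_assoc, sgn_add]
    congr 1
    rw [← Finset.sum_add_distrib]
    exact congrArg sgn (Finset.sum_congr rfl (fun i _ => (mul_add _ _ _).symm))
  simp_rw [h1, ← Finset.mul_sum, orth]
  have hz : ∀ u v : ZMod 2, u + v = 0 ↔ u = v := by decide
  have h2 : ∀ a : Fin r → ZMod 2, ((fun i => a i + y i) = 0) ↔ a = y := by
    intro a
    constructor
    · intro h; funext i; exact (hz _ _).mp (congrFun h i)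
    · rintro rfl; funext i; exact (hz _ _).mpr rfl
  simp_rw [h2, mul_ite, mul_zero, Finset.sum_ite_eq' Finset.univ y, Finset.mem_univ, if_true,
    mul_comm]

lemma main_walsh {n m r : ℕ}
    (f fs : (Fin n → ZMod 2) → ZMod 2)
    (φ φ' : Fin r → ((Fin n → ZMod 2) → ZMod 2))
    (hyp : ∀ (ω : Fin r → ZMod 2) (β : Fin n → ZMod 2),
      walsh (fun x => f x + ∑ i, ω i * φ i x) β = 2 ^ m * sgn (fs β + ∑ i, ω i * φ' i β))
    (F : (Fin r → ZMod 2) → ZMod 2) (β : Fin n → ZMod 2) :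
    walsh (fun x => f x + F (fun i => φ i x)) β
      = 2 ^ m * sgn (fs β + F (fun i => φ' i β)) := by
  have hcancel : ((2:ℤ)^r) ≠ 0 := by positivity
  apply mul_left_cancel₀ hcancel
  calc (2:ℤ)^r * walsh (fun x => f x + F (fun i => φ i x)) β
      = ∑ x : Fin n → ZMod 2,
          (2:ℤ)^r * sgn (F (fun i => φ i x) + (f x + ∑ i, β i * x i)) := by
        rw [walsh, Finset.mul_sum]
        refine Finset.sum_congr rfl fun x _ => ?_
        congr 1
        exact congrArg sgn (by ring)
    _ = ∑ x : Fin n → ZMod 2, ∑ ω : Fin r → ZMod 2, ∑ a : Fin r → ZMod 2,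
          sgn ((F a + (f x + ∑ i, β i * x i)) + ∑ i, ω i * a i + ∑ i, ω i * φ i x) := by
        refine Finset.sum_congr rfl fun x _ => ?_
        exact (key (fun a => F a + (f x + ∑ i, β i * x i)) (fun i => φ i x)).symm
    _ = ∑ ω : Fin r → ZMod 2, ∑ a : Fin r → ZMod 2,
          sgn (F a + ∑ i, ω i * a i) *
            walsh (fun x => f x + ∑ i, ω i * φ i x) β := by
        rw [Finset.sum_comm]
        refine Finset.sum_congr rfl fun ω _ => ?_
        rw [Finset.sum_comm]
        refine Finset.sum_congr rfl fun a _ => ?_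
        rw [walsh, Finset.mul_sum]
        refine Finset.sum_congr rfl fun x _ => ?_
        rw [← sgn_add]
        exact congrArg sgn (by ring)
    _ = 2 ^ m * ∑ ω : Fin r → ZMod 2, ∑ a : Fin r → ZMod 2,
          sgn ((F a + fs β) + ∑ i, ω i * a i + ∑ i, ω i * φ' i β) := by
        rw [Finset.mul_sum]
        refine Finset.sum_congr rfl fun ω _ => ?_
        rw [Finset.mul_sum]
        refine Finset.sum_congr rfl fun a _ => ?_
        rw [hyp]
        have hC : (F a + fs β + ∑ i, ω i * a i + ∑ i, ω i * φ' i β)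
            = (F a + ∑ i, ω i * a i) + (fs β + ∑ i, ω i * φ' i β) := by ring
        rw [hC, sgn_add (F a + ∑ i, ω i * a i) (fs β + ∑ i, ω i * φ' i β)]; ring
    _ = 2 ^ m * (2 ^ r * sgn (F (fun i => φ' i β) + fs β)) := by
        rw [key (fun a => F a + fs β) (fun i => φ' i β)]
    _ = 2 ^ r * (2 ^ m * sgn (fs β + F (fun i => φ' i β))) := by
        rw [show fs β + F (fun i => φ' i β) = F (fun i => φ' i β) + fs β by ring]
        ring

/-- Framework theorem: if `f` satisfies property `P_r` with respect to `φ` (each `f + ω·φ` is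
bent with dual `f* + ω·φ'`), then for every `F`, `h = f + F ∘ φ` is bent with dual
`h* = f* + F ∘ φ'`. -/
theorem statement6 {n m r : ℕ} (hn : n = 2 * m)
    (f fs : (Fin n → ZMod 2) → ZMod 2)
    (φ φ' : Fin r → ((Fin n → ZMod 2) → ZMod 2))
    (hyp : ∀ (ω : Fin r → ZMod 2) (β : Fin n → ZMod 2),
      walsh (fun x => f x + ∑ i, ω i * φ i x) β = 2 ^ m * sgn (fs β + ∑ i, ω i * φ' i β))
    (F : (Fin r → ZMod 2) → ZMod 2) :
    IsBent (fun x => f x + F (fun i => φ i x)) ∧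
      IsDualOf (fun x => fs x + F (fun i => φ' i x))
        (fun x => f x + F (fun i => φ i x)) := by
  have hm : n / 2 = m := by omega
  have hw := main_walsh f fs φ φ' hyp F
  constructor
  · refine ⟨⟨m, by omega⟩, fun μ => ?_⟩
    rw [hw μ, hm]
    by_cases h : fs μ + F (fun i => φ' i μ) = 0
    · left; simp [sgn, h]
    · right; simp [sgn, h]
  · intro μ
    rw [hw μ, hm]
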